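/- As an identity of formal power series in x over ℝ: (1 + rescale(−2)(exp)) · (∑_{n≥0} S_n x^n / n!) = 2, where exp is the exponential power series and rescale(−2) substitutes x ↦ −2x. Equivalently, the exponential generating function of the alternating excedance sums equals 2/(1 + e^{−2x}) = 1 + tanh(x) as formal power series. -/

import Mathlib

open Equiv Finset PowerSeries

/-- The excedance number of a permutation: the number of indices `i` with `σ i > i`. -/
def exc {n : ℕ} (σ : Equiv.Perm (Fin n)) : ℕ :=
  (Finset.univ.filter fun i : Fin n => i < σ i).card

/-- The alternating sum of excedances over all permutations of `Fin n`. -/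
def S (n : ℕ) : ℤ :=
  ∑ σ : Equiv.Perm (Fin n), (-1 : ℤ) ^ exc σ

def Sj : ℕ → ℕ → ℤ
  | 0, 0 => 1
  | 0, _+1 => 0
  | _+1, 0 => 0
  | n+1, k+1 => (k+1) * (Sj n (k+1) + Sj n k)

lemma exc_eq_sum {n : ℕ} (σ : Equiv.Perm (Fin n)) :
    exc σ = ∑ i : Fin n, if i < σ i then 1 else 0 := by
  rw [exc, Finset.card_filter]

lemma exc_dec_zero {n : ℕ} (e : Equiv.Perm (Fin n)) :
    exc (Equiv.Perm.decomposeFin.symm (0, e)) = exc e := by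
  rw [exc_eq_sum, exc_eq_sum, Fin.sum_univ_succ]
  simp [Equiv.Perm.decomposeFin_symm_apply_zero, Equiv.Perm.decomposeFin_symm_apply_succ,
    Fin.succ_lt_succ_iff]

lemma exc_dec_succ {n : ℕ} (q : Fin n) (e : Equiv.Perm (Fin n)) :
    exc (Equiv.Perm.decomposeFin.symm (q.succ, e)) + (if e.symm q < q then 1 else 0)
      = exc e + 1 := by
  rw [exc_eq_sum, exc_eq_sum, Fin.sum_univ_succ]
  have h0 : (Equiv.Perm.decomposeFin.symm (q.succ, e)) 0 = q.succ :=
    Equiv.Perm.decomposeFin_symm_apply_zero _ _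
  have hs : ∀ j : Fin n, ((if (j.succ : Fin (n+1)) < (Equiv.Perm.decomposeFin.symm (q.succ, e)) j.succ then (1:ℕ) else 0))
      = if e j = q then 0 else (if j < e j then 1 else 0) := by
    intro j
    rw [Equiv.Perm.decomposeFin_symm_apply_succ]
    by_cases hj : e j = q
    · rw [if_pos hj, hj, Equiv.swap_apply_right, if_neg]
      exact fun h => absurd h (by simp [Fin.le_def, Fin.lt_def])
    · rw [Equiv.swap_apply_of_ne_of_ne (Fin.succ_ne_zero _) (by simpa [Fin.succ_inj] using hj),
        if_neg hj]
      simp [Fin.succ_lt_succ_iff]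
  rw [Finset.sum_congr rfl (fun j _ => hs j), h0, if_pos (Fin.succ_pos q)]
  -- now : 1 + ∑ j, (if e j = q then 0 else ite (j < e j) 1 0) + ite (e.symm q < q) 1 0 = ∑ j, ite (j < e j) 1 0 + 1
  have key : ∑ j : Fin n, (if e j = q then 0 else (if j < e j then (1:ℕ) else 0))
      + (if e.symm q < q then 1 else 0) = ∑ j : Fin n, (if j < e j then 1 else 0) := by
    have : ∀ j : Fin n, (if j < e j then (1:ℕ) else 0)
        = (if e j = q then 0 else (if j < e j then 1 else 0))
          + (if j = e.symm q then (if e.symm q < q then 1 else 0) else 0) := by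
      intro j
      by_cases hj : e j = q
      · have hj' : j = e.symm q := by rw [← hj]; simp
        rw [if_pos hj, if_pos hj', ← hj', hj]
        simp
      · have hj' : j ≠ e.symm q := fun h => hj (by rw [h]; simp)
        simp [hj, hj']
    rw [Finset.sum_congr rfl (fun j _ => this j), Finset.sum_add_distrib,
      Finset.sum_ite_eq' Finset.univ (e.symm q)]
    simp
  omega

lemma exc_le {n : ℕ} (e : Equiv.Perm (Fin n)) : exc e ≤ n := by
  simpa [exc] using Finset.card_filter_le Finset.univ (fun i : Fin n => i < e i)

lemma card_symm_lt {n : ℕ} (e : Equiv.Perm (Fin n)) :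
    (Finset.univ.filter fun q : Fin n => e.symm q < q).card = exc e := by
  rw [exc]
  apply Finset.card_bij (fun q _ => e.symm q)
  · intro q hq; simp at hq ⊢; simpa using hq
  · intro a ha b hb h; exact e.symm.injective h
  · intro i hi; exact ⟨e i, by simpa using hi, by simp⟩

noncomputable def W (n m : ℕ) : ℤ := ∑ σ : Equiv.Perm (Fin n), ((exc σ).choose m : ℤ)

lemma int_choose (E m : ℕ) :
    ((E.choose (m+1) : ℤ)) * (m+1) = (E.choose m : ℤ) * ((E : ℤ) - m) := by
  rcases le_or_gt m E with h | h
  · have := Nat.choose_succ_right_eq E m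
    have hc : ((E.choose (m+1) * (m+1) : ℕ) : ℤ) = ((E.choose m * (E - m) : ℕ) : ℤ) :=
      congrArg _ this
    push_cast [Nat.cast_sub h] at hc
    linarith
  · rw [Nat.choose_eq_zero_of_lt h, Nat.choose_eq_zero_of_lt (by omega)]
    simp

-- key pointwise identity

lemma key_identity (E n m : ℕ) :
    ((E.choose (m+1) : ℤ)) + E * E.choose (m+1) + ((n : ℤ) - E) * (E+1).choose (m+1)
      = ((n : ℤ) - m) * (E.choose (m+1) + E.choose m) := by
  have hp : ((E+1).choose (m+1) : ℤ) = E.choose (m+1) + E.choose m := by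
    rw [Nat.choose_succ_succ E m]
    push_cast
    ring
  rw [hp]
  linear_combination int_choose E m

lemma W_succ (n m : ℕ) :
    W (n+1) m = ∑ e : Equiv.Perm (Fin n),
      (((exc e).choose m : ℤ) + exc e * (exc e).choose m + ((n:ℤ) - exc e) * (exc e + 1).choose m) := by
  rw [W, ← Equiv.Perm.decomposeFin.symm.sum_comp (fun σ => ((exc σ).choose m : ℤ)),
    Fintype.sum_prod_type]
  rw [Fin.sum_univ_succ]
  have hq : ∀ q : Fin n, ∀ e : Equiv.Perm (Fin n),
      ((exc (Equiv.Perm.decomposeFin.symm (q.succ, e))).choose m : ℤ)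
        = if e.symm q < q then ((exc e).choose m : ℤ) else ((exc e + 1).choose m : ℤ) := by
    intro q e
    have h := exc_dec_succ q e
    by_cases hlt : e.symm q < q
    · rw [if_pos hlt] at h ⊢
      have : exc (Equiv.Perm.decomposeFin.symm (q.succ, e)) = exc e := by omega
      rw [this]
    · rw [if_neg hlt] at h ⊢
      have : exc (Equiv.Perm.decomposeFin.symm (q.succ, e)) = exc e + 1 := by omega
      rw [this]
  have h0 : ∀ e : Equiv.Perm (Fin n),
      ((exc (Equiv.Perm.decomposeFin.symm ((0 : Fin (n+1)), e))).choose m : ℤ)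
        = ((exc e).choose m : ℤ) := by
    intro e; rw [exc_dec_zero]
  rw [Finset.sum_congr rfl (fun e _ => h0 e)]
  have hmain : ∑ q : Fin n, ∑ e : Equiv.Perm (Fin n),
      ((exc (Equiv.Perm.decomposeFin.symm (q.succ, e))).choose m : ℤ)
      = ∑ e : Equiv.Perm (Fin n),
        ((exc e : ℤ) * (exc e).choose m + ((n : ℤ) - exc e) * (exc e + 1).choose m) := by
    rw [Finset.sum_comm]
    apply Finset.sum_congr rfl
    intro e _
    rw [Finset.sum_congr rfl (fun q _ => hq q e), Finset.sum_ite, Finset.sum_const,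
      Finset.sum_const, card_symm_lt]
    simp only [not_lt]
    have h2 := Finset.card_filter_add_card_filter_not
      (s := (Finset.univ : Finset (Fin n))) (p := fun q : Fin n => e.symm q < q)
    simp only [not_lt, card_symm_lt, Finset.card_univ, Fintype.card_fin] at h2
    have hcard : (Finset.univ.filter fun q : Fin n => q ≤ e.symm q).card = n - exc e := by
      omega
    rw [hcard]
    have hle := exc_le e
    rw [nsmul_eq_mul, nsmul_eq_mul]
    push_cast [Nat.cast_sub hle]
    ring
  rw [hmain, ← Finset.sum_add_distrib]
  apply Finset.sum_congr rfl
  intro e _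
  push_cast
  ring

lemma W_succ_succ (n m : ℕ) : W (n+1) (m+1) = ((n : ℤ) - m) * (W n (m+1) + W n m) := by
  rw [W_succ]
  rw [Finset.sum_congr rfl (fun e _ => key_identity (exc e) n m)]
  rw [W, W, ← Finset.sum_add_distrib, Finset.mul_sum]

lemma W_succ_zero (n : ℕ) : W (n+1) 0 = ((n : ℤ) + 1) * W n 0 := by
  rw [W_succ, W, Finset.mul_sum]
  exact Finset.sum_congr rfl fun e _ => by simp [Nat.choose_zero_right]; ring

lemma Sj_zero_of_gt : ∀ n k, n < k → Sj n k = 0 := by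
  intro n
  induction n with
  | zero => intro k hk; match k, hk with | k+1, _ => rfl
  | succ n ih =>
    intro k hk
    match k, hk with
    | k+1, hk =>
      show (k+1 : ℤ) * (Sj n (k+1) + Sj n k) = 0
      rw [ih (k+1) (by omega), ih k (by omega)]
      ring

lemma W_eq (n : ℕ) : ∀ m, m ≤ n → W n m = Sj n (n - m) := by
  induction n with
  | zero =>
    intro m hm
    interval_cases m
    show W 0 0 = 1
    rw [W]
    rw [Finset.sum_congr rfl (fun σ _ => by rw [Nat.choose_zero_right]; rfl : ∀ σ ∈ Finset.univ, ((exc σ).choose 0 : ℤ) = 1),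
      Finset.sum_const]
    simp
  | succ n ih =>
    intro m hm
    rcases Nat.eq_or_lt_of_le hm with h | h
    · -- m = n+1 : W (n+1) (n+1) = Sj (n+1) 0 = 0
      subst h
      rw [W_succ_succ, Nat.sub_self]
      show ((n:ℤ) - n) * _ = Sj (n+1) 0
      rw [sub_self, zero_mul]
      rfl
    · have hmn : m ≤ n := by omega
      rcases m with _ | m
      · -- m = 0
        rw [W_succ_zero, ih 0 (by omega), Nat.sub_zero, Nat.sub_zero]
        have h1 : n + 1 - 0 = n + 1 := rfl
        have : Sj (n+1) (n+1) = ((n:ℤ)+1) * (Sj n (n+1) + Sj n n) := by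
          show ((n:ℤ)+1) * (Sj n (n+1) + Sj n n) = _
          push_cast; ring
        rw [this, Sj_zero_of_gt n (n+1) (by omega)]
        ring
      · -- m = m'+1 ≤ n
        rw [W_succ_succ, ih (m+1) hmn, ih m (by omega)]
        have hk : n + 1 - (m + 1) = (n - (m+1)) + 1 := by omega
        rw [hk]
        show _ = ((n - (m+1) : ℕ) + 1 : ℤ) * (Sj n ((n - (m+1)) + 1) + Sj n (n - (m+1)))
        have h2 : n - (m+1) + 1 = n - m := by omega
        have h3 : ((n - (m+1) : ℕ) + 1 : ℤ) = (n : ℤ) - m := by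
          have : ((n - (m+1) : ℕ) : ℤ) = (n : ℤ) - (m+1) := by
            rw [Nat.cast_sub (by omega)]; push_cast; ring
          rw [this]; ring
        rw [h2, h3]
        ring

lemma Sj_succ_succ (n k : ℕ) : Sj (n+1) (k+1) = (k+1) * (Sj n (k+1) + Sj n k) := rfl

lemma Sj_succ_zero (n : ℕ) : Sj (n+1) 0 = 0 := rfl

lemma Sj_zero_succ (k : ℕ) : Sj 0 (k+1) = 0 := rfl

lemma L1 : ∀ n j, ∑ k ∈ Finset.range (n+1), (n.choose k : ℤ) * Sj (n-k) j
    = Sj n j + Sj n (j+1) := by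
  intro n
  induction n with
  | zero =>
    intro j
    rw [Finset.sum_range_one, Sj_zero_of_gt 0 (j+1) (by omega)]
    simp
  | succ n ih =>
    intro j
    have e1 : ∑ k ∈ Finset.range (n+2), ((n+1).choose k : ℤ) * Sj (n+1-k) j
        = (∑ k ∈ Finset.range (n+1), ((n+1).choose (k+1) : ℤ) * Sj (n-k) j) + Sj (n+1) j := by
      rw [Finset.sum_range_succ']
      simp [Nat.succ_sub_succ]
    have e2 : ∀ k, (((n+1).choose (k+1) : ℤ)) * Sj (n-k) j
        = (n.choose k : ℤ) * Sj (n-k) j + (n.choose (k+1) : ℤ) * Sj (n-k) j := by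
      intro k
      rw [Nat.choose_succ_succ' n k]
      push_cast
      ring
    have e3 : ∑ k ∈ Finset.range (n+1), (n.choose (k+1) : ℤ) * Sj (n-k) j
        = (∑ i ∈ Finset.range (n+1), (n.choose i : ℤ) * Sj (n+1-i) j) - Sj (n+1) j := by
      have h1 := Finset.sum_range_succ' (fun i => (n.choose i : ℤ) * Sj (n+1-i) j) (n+1)
      have h2 := Finset.sum_range_succ (fun i => (n.choose i : ℤ) * Sj (n+1-i) j) (n+1)
      simp only [Nat.choose_succ_self, Nat.cast_zero, zero_mul, add_zero] at h2
      rw [h2] at h1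
      have h3 : ∀ k, (fun i => (n.choose i : ℤ) * Sj (n+1-i) j) (k+1)
          = (n.choose (k+1) : ℤ) * Sj (n-k) j := by
        intro k; simp [Nat.succ_sub_succ]
      rw [Finset.sum_congr rfl (fun k _ => h3 k)] at h1
      simp only [Nat.choose_zero_right, Nat.cast_one, one_mul, Nat.sub_zero] at h1
      linarith
    show ∑ k ∈ Finset.range (n+1+1), ((n+1).choose k : ℤ) * Sj (n+1-k) j = _
    rw [e1, Finset.sum_congr rfl (fun k _ => e2 k), Finset.sum_add_distrib, e3, ih j]
    -- now: Sj n j + Sj n (j+1) + (P - Sj (n+1) j) + Sj (n+1) j = Sj (n+1) j + Sj (n+1) (j+1)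
    -- where P = ∑ i in range (n+1), C(n,i) * Sj (n+1-i) j
    rcases j with _ | j
    · have hP : ∑ i ∈ Finset.range (n+1), (n.choose i : ℤ) * Sj (n+1-i) 0 = 0 := by
        apply Finset.sum_eq_zero
        intro i hi
        rw [Finset.mem_range] at hi
        have : n + 1 - i = (n - i) + 1 := by omega
        rw [this, Sj_succ_zero]
        ring
      rw [hP, Sj_succ_zero, Sj_succ_succ]
      push_cast
      ring
    · have hP : ∑ i ∈ Finset.range (n+1), (n.choose i : ℤ) * Sj (n+1-i) (j+1)
          = (j+1 : ℤ) * ((Sj n (j+1) + Sj n (j+2)) + (Sj n j + Sj n (j+1))) := by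
        have : ∀ i ∈ Finset.range (n+1), (n.choose i : ℤ) * Sj (n+1-i) (j+1)
            = (j+1 : ℤ) * ((n.choose i : ℤ) * Sj (n-i) (j+1) + (n.choose i : ℤ) * Sj (n-i) j) := by
          intro i hi
          rw [Finset.mem_range] at hi
          have h4 : n + 1 - i = (n - i) + 1 := by omega
          rw [h4, Sj_succ_succ]
          push_cast
          ring
        rw [Finset.sum_congr rfl this, ← Finset.mul_sum, Finset.sum_add_distrib, ih (j+1), ih j]
      rw [hP, Sj_succ_succ, Sj_succ_succ]
      push_cast
      ring

lemma neg_one_pow_eq (E n : ℕ) (hE : E ≤ n) :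
    (-1 : ℤ) ^ E = ∑ m ∈ Finset.range (n+1), (E.choose m : ℤ) * (-2) ^ m := by
  have h := add_pow (-2 : ℤ) 1 E
  simp only [one_pow, mul_one] at h
  have h1 : (-1 : ℤ) ^ E = ∑ m ∈ Finset.range (E+1), (-2:ℤ) ^ m * (E.choose m) := by
    norm_num at h
    rw [← h]
  rw [h1]
  rw [Finset.sum_subset (Finset.range_subset_range.2 (Nat.succ_le_succ hE))]
  · exact Finset.sum_congr rfl fun m _ => by ring
  · intro m _ hm
    rw [Finset.mem_range, not_lt] at hm
    rw [Nat.choose_eq_zero_of_lt (by omega)]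
    ring

lemma S_eq_sum_Sj (n : ℕ) :
    S n = ∑ k ∈ Finset.range (n+1), Sj n k * (-2 : ℤ) ^ (n - k) := by
  have h1 : S n = ∑ m ∈ Finset.range (n+1), (-2:ℤ)^m * W n m := by
    rw [S, Finset.sum_congr rfl (fun σ _ => neg_one_pow_eq (exc σ) n (exc_le σ))]
    rw [Finset.sum_comm]
    exact Finset.sum_congr rfl fun m _ => by rw [W, Finset.mul_sum]; exact Finset.sum_congr rfl fun σ _ => by ring
  rw [h1]
  rw [Finset.sum_congr rfl (fun m hm => by
    rw [W_eq n m (by simpa [Nat.lt_succ_iff] using hm)] :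
    ∀ m ∈ Finset.range (n+1), (-2:ℤ)^m * W n m = (-2:ℤ)^m * Sj n (n-m))]
  rw [← Finset.sum_range_reflect (fun k => Sj n k * (-2:ℤ)^(n-k)) (n+1)]
  apply Finset.sum_congr rfl
  intro m hm
  rw [Finset.mem_range] at hm
  have h2 : n + 1 - 1 - m = n - m := by omega
  have h3 : n - (n - m) = m := by omega
  rw [h2, h3]
  ring

lemma S_ext (m n : ℕ) (h : m ≤ n) :
    S m = ∑ j ∈ Finset.range (n+1), Sj m j * (-2 : ℤ) ^ (m - j) := by
  rw [S_eq_sum_Sj]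
  apply Finset.sum_subset (Finset.range_subset_range.2 (Nat.succ_le_succ h))
  intro j _ hj
  rw [Finset.mem_range, not_lt] at hj
  rw [Sj_zero_of_gt m j (by omega)]
  ring

lemma L3 (n : ℕ) (hn : 1 ≤ n) :
    (∑ k ∈ Finset.range (n+1), (n.choose k : ℤ) * (-2) ^ k * S (n-k)) + S n = 0 := by
  have step1 : ∑ k ∈ Finset.range (n+1), (n.choose k : ℤ) * (-2) ^ k * S (n-k)
      = ∑ j ∈ Finset.range (n+1), (-2 : ℤ) ^ (n-j) * (Sj n j + Sj n (j+1)) := by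
    have e1 : ∀ k ∈ Finset.range (n+1), (n.choose k : ℤ) * (-2) ^ k * S (n-k)
        = ∑ j ∈ Finset.range (n+1), (-2 : ℤ)^(n-j) * ((n.choose k : ℤ) * Sj (n-k) j) := by
      intro k hk
      rw [Finset.mem_range, Nat.lt_succ_iff] at hk
      rw [S_ext (n-k) n (by omega), Finset.mul_sum]
      apply Finset.sum_congr rfl
      intro j _
      rcases le_or_gt j (n-k) with hj | hj
      · have : k + ((n-k) - j) = n - j := by omega
        rw [← this, pow_add]
        ring
      · rw [Sj_zero_of_gt (n-k) j hj]
        ring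
    rw [Finset.sum_congr rfl e1, Finset.sum_comm]
    apply Finset.sum_congr rfl
    intro j _
    rw [← Finset.mul_sum, L1 n j]
  rw [step1, S_eq_sum_Sj n, ← Finset.sum_add_distrib]
  have step2 : ∀ j ∈ Finset.range (n+1),
      (-2 : ℤ)^(n-j) * (Sj n j + Sj n (j+1)) + Sj n j * (-2)^(n-j)
        = 2 * (((-2:ℤ)^(n-j) * Sj n j) - ((-2:ℤ)^(n-(j+1)) * Sj n (j+1))) := by
    intro j hj
    rw [Finset.mem_range, Nat.lt_succ_iff] at hj
    rcases Nat.eq_or_lt_of_le hj with h | h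
    · subst h
      rw [Sj_zero_of_gt j (j+1) (by omega)]
      ring
    · have : n - j = (n - (j+1)) + 1 := by omega
      rw [this, pow_succ]
      ring
  rw [Finset.sum_congr rfl step2, ← Finset.mul_sum,
    Finset.sum_range_sub' (fun j => ((-2:ℤ)^(n-j) * Sj n j))]
  have h0 : Sj n 0 = 0 := by
    match n, hn with
    | n+1, _ => rfl
  rw [h0, Sj_zero_of_gt n (n+1) (by omega)]
  ring

lemma S_zero : S 0 = 1 := by
  rw [S]
  rw [Finset.sum_congr rfl (fun σ _ => by
      rw [show exc σ = 0 from by simp [exc], pow_zero] : ∀ σ ∈ Finset.univ, (-1:ℤ)^exc σ = 1)]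
  simp

theorem egf_alternating_excedance_sums_formal :
    (1 + PowerSeries.rescale (-2) (PowerSeries.exp ℝ)) *
        PowerSeries.mk (fun n => (S n : ℝ) / n.factorial) = 2 := by
  ext n
  rw [PowerSeries.coeff_mul]
  have hco : ∀ k : ℕ, (PowerSeries.coeff k) (1 + PowerSeries.rescale (-2) (PowerSeries.exp ℝ))
      = (if k = 0 then 1 else 0) + (-2:ℝ)^k / k.factorial := by
    intro k
    rw [map_add, PowerSeries.coeff_rescale, PowerSeries.coeff_exp, PowerSeries.coeff_one]
    simp
    ring
  have h2 : (PowerSeries.coeff (R := ℝ) n) 2 = if n = 0 then 2 else 0 := by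
    have : (2 : PowerSeries ℝ) = PowerSeries.C 2 := by
      rw [map_ofNat]
    rw [this, PowerSeries.coeff_C]
  rw [h2, Finset.Nat.sum_antidiagonal_eq_sum_range_succ_mk]
  simp only [PowerSeries.coeff_mk, hco]
  have split : ∑ k ∈ Finset.range (n+1),
      ((if k = 0 then (1:ℝ) else 0) + (-2:ℝ)^k / k.factorial) * ((S (n-k) : ℝ) / (n-k).factorial)
      = (S n : ℝ) / n.factorial
        + ∑ k ∈ Finset.range (n+1), ((-2:ℝ)^k / k.factorial) * ((S (n-k) : ℝ) / (n-k).factorial) := by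
    rw [Finset.sum_congr rfl (fun k _ => by ring :
      ∀ k ∈ Finset.range (n+1), ((if k = 0 then (1:ℝ) else 0) + (-2:ℝ)^k / k.factorial) * ((S (n-k) : ℝ) / (n-k).factorial)
        = (if k = 0 then (1:ℝ) else 0) * ((S (n-k) : ℝ) / (n-k).factorial)
          + ((-2:ℝ)^k / k.factorial) * ((S (n-k) : ℝ) / (n-k).factorial)),
      Finset.sum_add_distrib]
    congr 1
    rw [Finset.sum_eq_single 0]
    · simp
    · intro k _ hk; simp [hk]
    · intro h; exact absurd (Finset.mem_range.2 (by omega)) h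
  rw [split]
  have conv : ∑ k ∈ Finset.range (n+1), ((-2:ℝ)^k / k.factorial) * ((S (n-k) : ℝ) / (n-k).factorial)
      = (∑ k ∈ Finset.range (n+1), (n.choose k : ℝ) * (-2)^k * (S (n-k) : ℝ)) / n.factorial := by
    rw [Finset.sum_div]
    apply Finset.sum_congr rfl
    intro k hk
    rw [Finset.mem_range, Nat.lt_succ_iff] at hk
    have hfact : (n.choose k : ℝ) * k.factorial * (n-k).factorial = n.factorial := by
      exact_mod_cast congrArg (Nat.cast (R := ℝ)) (Nat.choose_mul_factorial_mul_factorial hk)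
    have h1 : (k.factorial : ℝ) ≠ 0 := Nat.cast_ne_zero.2 (Nat.factorial_ne_zero k)
    have h2 : ((n-k).factorial : ℝ) ≠ 0 := Nat.cast_ne_zero.2 (Nat.factorial_ne_zero _)
    have h3 : (n.factorial : ℝ) ≠ 0 := Nat.cast_ne_zero.2 (Nat.factorial_ne_zero n)
    field_simp
    rw [← hfact]
    ring
  rw [conv]
  rcases Nat.eq_zero_or_pos n with hn | hn
  · subst hn
    rw [if_pos rfl]
    simp [S_zero]
    norm_num
  · rw [if_neg (by omega)]
    have hL := L3 n hn
    have hLr : (∑ k ∈ Finset.range (n+1), (n.choose k : ℝ) * (-2) ^ k * (S (n-k) : ℝ)) + (S n : ℝ) = 0 := by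
      exact_mod_cast congrArg (fun z : ℤ => (z : ℝ)) hL
    have h3 : (n.factorial : ℝ) ≠ 0 := Nat.cast_ne_zero.2 (Nat.factorial_ne_zero n)
    field_simp
    linarith
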